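/- arXiv:2112.05888 — 6 statements merged into one kernel-verified Lean document; each statement's English description precedes it below -/
import Mathlib

section
/- Let I ⊆ ℝ be an interval, let p, q : I → ℝ be strictly positive functions such that p/q is strictly increasing on I, and define the kernel k(x,y) = p(min(x,y))·q(max(x,y)). Then for any n ≥ 1 and any strictly increasing points x₁ < x₂ < ⋯ < xₙ in I, the n×n matrix K with entries K_{ij} = k(x_i, x_j) is positive definite. -/
/-!
With `r = p / q`, monotonicity of `r` gives `k(x, y) = q x * min (r x) (r y) * q y`, so the
kernel matrix is the congruence `D M D` of the Brownian covariance matrix `M = (min rᵢ rⱼ)` by the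
invertible diagonal matrix `D = diag (q xᵢ)`. The matrix `M` is positive definite when
`0 < r₀ < ⋯ < rₙ₋₁`: subtracting `r₀` from every entry leaves the covariance matrix of
`r₁ - r₀ < ⋯ < rₙ₋₁ - r₀` bordered by a zero row and column, so the quadratic form of `M` at `v`
is `r₀ (∑ vᵢ)²` plus the smaller form at `(v₁, …, vₙ₋₁)`, and induction on `n` applies.
-/

open Matrix

def minMatrix {ι : Type*} (t : ι → ℝ) : Matrix ι ι ℝ := Matrix.of fun i j => min (t i) (t j)

theorem minMatrix_eq_const_add_minMatrix_sub {ι : Type*} (t : ι → ℝ) (c : ℝ) :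
    minMatrix t = of (fun _ _ => c) + minMatrix (fun i => t i - c) := by
  ext i j
  simp [minMatrix, min_sub_sub_right]

theorem dotProduct_of_const_mulVec {ι : Type*} [Fintype ι] (c : ℝ) (v : ι → ℝ) :
    v ⬝ᵥ (of (fun _ _ => c) *ᵥ v) = c * (∑ i, v i) ^ 2 := by
  simp only [dotProduct, mulVec, of_apply, ← Finset.mul_sum, ← Finset.sum_mul]
  ring

theorem dotProduct_minMatrix_cons_zero_mulVec {n : ℕ} (u : Fin n → ℝ) (hu : ∀ i, 0 ≤ u i)
    (v : Fin (n + 1) → ℝ) :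
    v ⬝ᵥ (minMatrix (Fin.cons 0 u : Fin (n + 1) → ℝ) *ᵥ v) =
      Fin.tail v ⬝ᵥ (minMatrix u *ᵥ Fin.tail v) := by
  simp [dotProduct, mulVec, minMatrix, Fin.sum_univ_succ, hu, Fin.tail]

theorem dotProduct_minMatrix_mulVec_succ {n : ℕ} (t : Fin (n + 1) → ℝ) (ht : ∀ i, t 0 ≤ t i)
    (v : Fin (n + 1) → ℝ) :
    v ⬝ᵥ (minMatrix t *ᵥ v) = t 0 * (∑ i, v i) ^ 2 +
      Fin.tail v ⬝ᵥ (minMatrix (fun i => t i.succ - t 0) *ᵥ Fin.tail v) := by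
  have hcons : (fun i => t i - t 0) = Fin.cons 0 (fun i => t i.succ - t 0) := by
    ext i; cases i using Fin.cases <;> simp
  rw [minMatrix_eq_const_add_minMatrix_sub t (t 0), add_mulVec, dotProduct_add,
    dotProduct_of_const_mulVec, hcons,
    dotProduct_minMatrix_cons_zero_mulVec _ fun i => sub_nonneg.2 (ht _)]

theorem isHermitian_minMatrix {ι : Type*} (t : ι → ℝ) : (minMatrix t).IsHermitian := by
  ext i j
  simp [minMatrix, min_comm]

theorem posDef_minMatrix {n : ℕ} {t : Fin n → ℝ} (ht : StrictMono t) (hpos : ∀ i, 0 < t i) :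
    (minMatrix t).PosDef := by
  induction n with
  | zero => exact .of_dotProduct_mulVec_pos (isHermitian_minMatrix t) fun v hv =>
      absurd (Subsingleton.elim v 0) hv
  | succ n ih =>
    have htail : (minMatrix fun i : Fin n => t i.succ - t 0).PosDef :=
      ih (fun i j hij => sub_lt_sub_right (ht (Fin.succ_lt_succ_iff.2 hij)) _)
        fun i => sub_pos.2 (ht (Fin.succ_pos i))
    refine .of_dotProduct_mulVec_pos (isHermitian_minMatrix t) fun v hv => ?_
    rw [star_trivial, dotProduct_minMatrix_mulVec_succ t fun i => ht.monotone (Fin.zero_le i)]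
    by_cases hv' : Fin.tail v = 0
    · have hv0 : v 0 ≠ 0 := fun h0 => hv (funext (Fin.cases h0 (congrFun hv')))
      have hsum : ∑ i, v i = v 0 := by
        rw [Fin.sum_univ_succ]; simp [← Fin.tail_def, hv']
      rw [hv', hsum, mulVec_zero, dotProduct_zero, add_zero]
      exact mul_pos (hpos 0) (by positivity)
    · exact add_pos_of_nonneg_of_pos (mul_nonneg (hpos 0).le (sq_nonneg _))
        (by simpa using htail.dotProduct_mulVec_pos hv')

theorem apply_min_mul_apply_max_eq {I : Set ℝ} {p q : ℝ → ℝ} (hq : ∀ x ∈ I, q x ≠ 0)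
    (hpq : MonotoneOn (fun x => p x / q x) I) {x y : ℝ} (hx : x ∈ I) (hy : y ∈ I) :
    p (min x y) * q (max x y) = q x * min (p x / q x) (p y / q y) * q y := by
  wlog hxy : x ≤ y generalizing x y
  · rw [min_comm, max_comm, this hy hx (le_of_not_ge hxy), min_comm]
    ring
  rw [min_eq_left hxy, max_eq_right hxy, min_eq_left (hpq hx hy hxy)]
  field_simp [hq x hx]

theorem markov_kernel_matrix_posDef_general
    (I : Set ℝ)
    (p q : ℝ → ℝ)
    (hp : ∀ x ∈ I, 0 < p x) (hq : ∀ x ∈ I, 0 < q x)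
    (hpq : StrictMonoOn (fun x => p x / q x) I)
    (n : ℕ)
    (x : Fin n → ℝ) (hxI : ∀ i, x i ∈ I) (hx : StrictMono x) :
    (Matrix.of fun i j : Fin n =>
      p (min (x i) (x j)) * q (max (x i) (x j))).PosDef := by
  set D : Matrix (Fin n) (Fin n) ℝ := diagonal fun i => q (x i)
  have hK : (of fun i j => p (min (x i) (x j)) * q (max (x i) (x j))) =
      star D * minMatrix (fun i => p (x i) / q (x i)) * D := by
    ext i j
    simp [D, minMatrix, star_eq_conjTranspose, mul_diagonal,
      apply_min_mul_apply_max_eq (fun y hy => (hq y hy).ne') hpq.monotoneOn (hxI i) (hxI j)]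
  have hD : IsUnit D := isUnit_diagonal.2 (Pi.isUnit_iff.2 fun i => (hq _ (hxI i)).ne'.isUnit)
  rw [hK, hD.posDef_star_left_conjugate_iff]
  exact posDef_minMatrix (fun i j hij => hpq (hxI i) (hxI j) (hx hij))
    fun i => div_pos (hp _ (hxI i)) (hq _ (hxI i))

/-- For a one-dimensional Markov kernel
`k(x,y) = p(min(x,y)) * q(max(x,y))` on an interval `I ⊆ ℝ`, with `p, q` strictly
positive on `I` and `p/q` strictly increasing on `I`, the kernel matrix on any
strictly increasing tuple of points of `I` is positive definite. -/
theorem markov_kernel_matrix_posDef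
    (I : Set ℝ) (hI : I.OrdConnected)
    (p q : ℝ → ℝ)
    (hp : ∀ x ∈ I, 0 < p x) (hq : ∀ x ∈ I, 0 < q x)
    (hpq : StrictMonoOn (fun x => p x / q x) I)
    (n : ℕ) (hn : 1 ≤ n)
    (x : Fin n → ℝ) (hxI : ∀ i, x i ∈ I) (hx : StrictMono x) :
    (Matrix.of fun i j : Fin n =>
      p (min (x i) (x j)) * q (max (x i) (x j))).PosDef :=
  markov_kernel_matrix_posDef_general I p q hp hq hpq n x hxI hx
end

section
/- Let I ⊆ ℝ be an interval, let p, q : I → ℝ be strictly positive with p/q strictly increasing on I, and set k(x,y) = p(min(x,y))·q(max(x,y)). For any strictly increasing points x₁ < x₂ < ⋯ < xₙ in I, the matrix K = [k(x_i,x_j)]_{i,j=1}^n is invertible and its inverse is tridiagonal: (K⁻¹)_{ij} = 0 whenever |i − j| ≥ 2. -/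
/-!
The kernel matrix is the Green's function of a second-order difference operator. Pad the
sequences `aₖ = p(xₖ)`, `bₖ = q(xₖ)` by `a₀ = 0, b₀ = 1` at the left and `aₙ₊₁ = 1, bₙ₊₁ = 0` at
the right; all discrete Wronskians `aₘ₊₁ bₘ - aₘ bₘ₊₁` are then positive, the interior ones
because `p/q` is strictly increasing and the two at the ends because `p` and `q` are positive.
The symmetric tridiagonal operator `T` normalised to kill both `a` and `b` kills the column
`k ↦ a_{min k j} b_{max k j}` away from `k = j`, where that column is locally a multiple of `a`
or of `b`, while at `k = j` the kink contributes one Wronskian, giving `1`. Hence `T K = 1` and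
`K⁻¹ = T` is tridiagonal. The padding makes the first and last rows of `T` instances of the
general row, because the padded column vanishes at `0` and `n + 1`.
-/

open Finset Matrix

def padSeq {α : Type*} {n : ℕ} (lo : α) (f : Fin n → α) (hi : α) : ℕ → α
  | 0 => lo
  | m + 1 => if h : m < n then f ⟨m, h⟩ else hi

section padSeq

variable {α : Type*} {n : ℕ} (lo : α) (f : Fin n → α) (hi : α)

@[simp]
lemma padSeq_zero : padSeq lo f hi 0 = lo := rfl

@[simp]
lemma padSeq_succ (i : Fin n) : padSeq lo f hi (i + 1) = f i := by
  simp [padSeq]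

lemma padSeq_succ_of_le {m : ℕ} (h : n ≤ m) : padSeq lo f hi (m + 1) = hi := by
  simp [padSeq, h]

end padSeq

section JacobiOperator

variable (a b : ℕ → ℝ)

def wronskian (m : ℕ) : ℝ := a (m + 1) * b m - a m * b (m + 1)

def greenKernel (k j : ℕ) : ℝ := a (min k j) * b (max k j)

/-- Row `i + 1` of the symmetric tridiagonal operator whose solutions are `a` and `b`. -/
noncomputable def jacobiRow (i k : ℕ) : ℝ :=
  (if k = i then -(wronskian a b i)⁻¹ else 0) +
  (if k = i + 1 then (a (i + 2) * b i - a i * b (i + 2)) /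
    (wronskian a b i * wronskian a b (i + 1)) else 0) +
  (if k = i + 2 then -(wronskian a b (i + 1))⁻¹ else 0)

noncomputable def jacobiApply (u : ℕ → ℝ) (i : ℕ) : ℝ :=
  -u i / wronskian a b i +
  (a (i + 2) * b i - a i * b (i + 2)) / (wronskian a b i * wronskian a b (i + 1)) * u (i + 1) -
  u (i + 2) / wronskian a b (i + 1)

variable {a b}

lemma jacobiRow_eq_zero {i k : ℕ} (h : k ≠ i ∧ k ≠ i + 1 ∧ k ≠ i + 2) : jacobiRow a b i k = 0 := by
  simp [jacobiRow, h.1, h.2.1, h.2.2]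

lemma sum_jacobiRow_mul {i N : ℕ} (hN : i + 2 < N) (u : ℕ → ℝ) :
    ∑ k ∈ range N, jacobiRow a b i k * u k = jacobiApply a b u i := by
  simp only [jacobiRow, jacobiApply, add_mul, ite_mul, zero_mul, sum_add_distrib, sum_ite_eq',
    mem_range, show i < N by omega, show i + 1 < N by omega, hN, if_true]
  ring

variable {i : ℕ} (hW₀ : wronskian a b i ≠ 0) (hW₁ : wronskian a b (i + 1) ≠ 0)
include hW₀ hW₁

lemma jacobiApply_eq_zero_of_recurrence {u : ℕ → ℝ}
    (hu : (a (i + 2) * b i - a i * b (i + 2)) * u (i + 1) =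
      u i * wronskian a b (i + 1) + u (i + 2) * wronskian a b i) :
    jacobiApply a b u i = 0 := by
  rw [jacobiApply, div_mul_eq_mul_div, hu]
  field_simp
  ring

lemma jacobiApply_left : jacobiApply a b a i = 0 :=
  jacobiApply_eq_zero_of_recurrence hW₀ hW₁ (by simp only [wronskian]; ring)

lemma jacobiApply_right : jacobiApply a b b i = 0 :=
  jacobiApply_eq_zero_of_recurrence hW₀ hW₁ (by simp only [wronskian]; ring)

lemma jacobiApply_greenKernel (j : ℕ) :
    jacobiApply a b (greenKernel a b · j) i = if i + 1 = j then 1 else 0 := by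
  simp only [greenKernel]
  rcases lt_trichotomy (i + 1) j with hij | rfl | hij
  · have h : jacobiApply a b (fun k => a (min k j) * b (max k j)) i =
        b j * jacobiApply a b a i := by
      simp only [jacobiApply, min_eq_left (by omega : i ≤ j), max_eq_right (by omega : i ≤ j),
        min_eq_left (by omega : i + 1 ≤ j), max_eq_right (by omega : i + 1 ≤ j),
        min_eq_left (by omega : i + 2 ≤ j), max_eq_right (by omega : i + 2 ≤ j)]
      ring
    rw [h, jacobiApply_left hW₀ hW₁, mul_zero, if_neg hij.ne]
  · have h : jacobiApply a b (fun k => a (min k (i + 1)) * b (max k (i + 1))) i =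
        b (i + 1) * jacobiApply a b a i + wronskian a b (i + 1) / wronskian a b (i + 1) := by
      simp only [jacobiApply, wronskian, min_eq_left (by omega : i ≤ i + 1),
        max_eq_right (by omega : i ≤ i + 1), min_self, max_self,
        min_eq_right (by omega : i + 1 ≤ i + 2), max_eq_left (by omega : i + 1 ≤ i + 2)]
      ring
    rw [h, jacobiApply_left hW₀ hW₁, div_self hW₁, mul_zero, zero_add, if_pos rfl]
  · have h : jacobiApply a b (fun k => a (min k j) * b (max k j)) i =
        a j * jacobiApply a b b i := by
      simp only [jacobiApply, min_eq_right (by omega : j ≤ i), max_eq_left (by omega : j ≤ i),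
        min_eq_right (by omega : j ≤ i + 1), max_eq_left (by omega : j ≤ i + 1),
        min_eq_right (by omega : j ≤ i + 2), max_eq_left (by omega : j ≤ i + 2)]
      ring
    rw [h, jacobiApply_right hW₀ hW₁, mul_zero, if_neg hij.ne']

end JacobiOperator

theorem jacobiMatrix_mul_greenMatrix {a b : ℕ → ℝ} {n : ℕ} (ha : a 0 = 0) (hb : b (n + 1) = 0)
    (hW : ∀ m ≤ n, wronskian a b m ≠ 0) :
    (of fun i j : Fin n => jacobiRow a b i (j + 1)) *
      (of fun i j : Fin n => greenKernel a b (i + 1) (j + 1)) = 1 := by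
  ext i j
  have hG₀ : greenKernel a b 0 (j + 1) = 0 := by simp [greenKernel, ha]
  have hG₁ : greenKernel a b (n + 1) (j + 1) = 0 := by
    simp [greenKernel, hb]
  calc ∑ k : Fin n, jacobiRow a b i (k + 1) * greenKernel a b (k + 1) (j + 1)
      = ∑ k ∈ range (n + 2), jacobiRow a b i k * greenKernel a b k (j + 1) := by
        rw [Fin.sum_univ_eq_sum_range (fun k => jacobiRow a b i (k + 1) *
          greenKernel a b (k + 1) (j + 1)), sum_range_succ, sum_range_succ', hG₀, hG₁]
        simp
    _ = (1 : Matrix (Fin n) (Fin n) ℝ) i j := by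
        rw [sum_jacobiRow_mul (by omega), jacobiApply_greenKernel (hW i (by omega))
          (hW (i + 1) (by omega)), one_apply]
        simp [Fin.val_inj]

lemma wronskian_padSeq_pos {n : ℕ} {f g : Fin n → ℝ} (hf : ∀ i, 0 < f i) (hg : ∀ i, 0 < g i)
    (hfg : StrictMono fun i => f i / g i) {m : ℕ} (hm : m ≤ n) :
    0 < wronskian (padSeq 0 f 1) (padSeq 1 g 0) m := by
  rcases m with _ | k
  · by_cases hn : 0 < n
    · simp [wronskian, padSeq, hn, hf]
    · simp [wronskian, padSeq_succ_of_le _ _ _ (by omega : n ≤ 0)]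
  · have hk := padSeq_succ (0 : ℝ) f 1 ⟨k, by omega⟩
    have hk' := padSeq_succ (1 : ℝ) g 0 ⟨k, by omega⟩
    simp only [wronskian, hk, hk']
    by_cases hn : k + 1 < n
    · have hl := padSeq_succ (0 : ℝ) f 1 ⟨k + 1, hn⟩
      have hl' := padSeq_succ (1 : ℝ) g 0 ⟨k + 1, hn⟩
      simp only [hl, hl']
      have h := hfg (show (⟨k, by omega⟩ : Fin n) < ⟨k + 1, hn⟩ from Fin.mk_lt_mk.2 k.lt_succ_self)
      rw [div_lt_div_iff₀ (hg _) (hg _)] at h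
      linarith
    · rw [padSeq_succ_of_le _ _ _ (by omega), padSeq_succ_of_le _ _ _ (by omega)]
      simpa using hg _

lemma greenKernel_padSeq {n : ℕ} {x : Fin n → ℝ} (hx : Monotone x) (p q : ℝ → ℝ)
    (lo hi lo' hi' : ℝ) (i j : Fin n) :
    greenKernel (padSeq lo (fun i => p (x i)) hi) (padSeq lo' (fun i => q (x i)) hi') (i + 1) (j + 1)
      = p (min (x i) (x j)) * q (max (x i) (x j)) := by
  rw [greenKernel, Nat.add_min_add_right, Nat.add_max_add_right, ← Fin.coe_min, ← Fin.coe_max,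
    padSeq_succ, padSeq_succ, hx.map_min, hx.map_max]

theorem markov_kernel_matrix_inverse_tridiagonal_general
    (I : Set ℝ)
    (p q : ℝ → ℝ)
    (hp : ∀ x ∈ I, 0 < p x) (hq : ∀ x ∈ I, 0 < q x)
    (hpq : StrictMonoOn (fun x => p x / q x) I)
    (n : ℕ)
    (x : Fin n → ℝ) (hxI : ∀ i, x i ∈ I) (hx : StrictMono x)
    (K : Matrix (Fin n) (Fin n) ℝ)
    (hK : ∀ i j, K i j = p (min (x i) (x j)) * q (max (x i) (x j))) :
    IsUnit K.det ∧ ∀ i j : Fin n, 2 ≤ |(i : ℤ) - (j : ℤ)| → K⁻¹ i j = 0 := by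
  set a := padSeq 0 (fun i => p (x i)) 1
  set b := padSeq 1 (fun i => q (x i)) 0
  have hW : ∀ m ≤ n, wronskian a b m ≠ 0 := fun m hm =>
    (wronskian_padSeq_pos (fun i => hp _ (hxI i)) (fun i => hq _ (hxI i))
      (fun i j hij => hpq (hxI i) (hxI j) (hx hij)) hm).ne'
  have hKG : K = of fun i j : Fin n => greenKernel a b (i + 1) (j + 1) := by
    ext i j
    rw [hK, of_apply, greenKernel_padSeq hx.monotone]
  have hTK := jacobiMatrix_mul_greenMatrix (padSeq_zero _ _ _) (padSeq_succ_of_le _ _ _ le_rfl) hW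
  rw [← hKG] at hTK
  refine ⟨isUnit_det_of_left_inverse hTK, fun i j hij => ?_⟩
  rw [inv_eq_left_inv hTK, of_apply]
  exact jacobiRow_eq_zero (by rw [le_abs] at hij; omega)

/-- For a one-dimensional Markov kernel
`k(x,y) = p(min(x,y)) * q(max(x,y))` on an interval `I ⊆ ℝ` (with `p, q` strictly
positive and `p/q` strictly increasing on `I`), the kernel matrix `K` on any strictly
increasing tuple of points of `I` is invertible and its inverse is tridiagonal:
`(K⁻¹) i j = 0` whenever `|i - j| ≥ 2`. -/
theorem markov_kernel_matrix_inverse_tridiagonal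
    (I : Set ℝ) (hI : I.OrdConnected)
    (p q : ℝ → ℝ)
    (hp : ∀ x ∈ I, 0 < p x) (hq : ∀ x ∈ I, 0 < q x)
    (hpq : StrictMonoOn (fun x => p x / q x) I)
    (n : ℕ) (hn : 1 ≤ n)
    (x : Fin n → ℝ) (hxI : ∀ i, x i ∈ I) (hx : StrictMono x)
    (K : Matrix (Fin n) (Fin n) ℝ)
    (hK : ∀ i j, K i j = p (min (x i) (x j)) * q (max (x i) (x j))) :
    IsUnit K.det ∧ ∀ i j : Fin n, 2 ≤ |(i : ℤ) - (j : ℤ)| → K⁻¹ i j = 0 :=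
  markov_kernel_matrix_inverse_tridiagonal_general I p q hp hq hpq n x hxI hx K hK
end

section
/- Let I ⊆ ℝ be an interval, let p, q : I → ℝ be strictly positive, and set k(x,y) = p(min(x,y))·q(max(x,y)). Let a < b < c be points of I and let c₁, c₂, c₃ ∈ ℝ be such that the function ψ(x) = c₁·k(x,a) + c₂·k(x,b) + c₃·k(x,c) satisfies ψ(a) = 0 and ψ(c) = 0. Then ψ(x) = 0 for every x ∈ I with x ≤ a, and ψ(x) = 0 for every x ∈ I with x ≥ c. -/
/-- Let `k(x,y) = p(min(x,y)) * q(max(x,y))` with `p, q` strictly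
positive on an interval `I ⊆ ℝ`. If `ψ = c₁ k(·,a) + c₂ k(·,b) + c₃ k(·,c)` with
`a < b < c` in `I` satisfies `ψ(a) = 0` and `ψ(c) = 0`, then `ψ` vanishes on
`I ∩ (-∞, a]` and on `I ∩ [c, ∞)`. -/
theorem markov_feature_vanishes_outside_cell
    (I : Set ℝ) (hI : I.OrdConnected)
    (p q : ℝ → ℝ)
    (hp : ∀ x ∈ I, 0 < p x) (hq : ∀ x ∈ I, 0 < q x)
    (k : ℝ → ℝ → ℝ) (hk : ∀ x y, k x y = p (min x y) * q (max x y))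
    (a b c : ℝ) (haI : a ∈ I) (hbI : b ∈ I) (hcI : c ∈ I)
    (hab : a < b) (hbc : b < c)
    (c₁ c₂ c₃ : ℝ)
    (ψ : ℝ → ℝ) (hψ : ∀ x, ψ x = c₁ * k x a + c₂ * k x b + c₃ * k x c)
    (hψa : ψ a = 0) (hψc : ψ c = 0) :
    (∀ x ∈ I, x ≤ a → ψ x = 0) ∧ (∀ x ∈ I, c ≤ x → ψ x = 0) := by
  have hfactL : ∀ x, x ≤ a → ψ x = p x * (c₁ * q a + c₂ * q b + c₃ * q c) := by
    intro x hx
    rw [hψ, hk, hk, hk, min_eq_left hx, max_eq_right hx,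
      min_eq_left (hx.trans hab.le), max_eq_right (hx.trans hab.le),
      min_eq_left (hx.trans (hab.trans hbc).le),
      max_eq_right (hx.trans (hab.trans hbc).le)]
    ring
  have hfactR : ∀ x, c ≤ x → ψ x = q x * (c₁ * p a + c₂ * p b + c₃ * p c) := by
    intro x hx
    rw [hψ, hk, hk, hk, min_eq_right hx, max_eq_left hx,
      min_eq_right ((hbc.le.trans hx)), max_eq_left ((hbc.le.trans hx)),
      min_eq_right (((hab.trans hbc).le.trans hx)),
      max_eq_left (((hab.trans hbc).le.trans hx))]
    ring
  have hL0 : c₁ * q a + c₂ * q b + c₃ * q c = 0 := by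
    have := hfactL a le_rfl
    rw [hψa] at this
    exact (mul_eq_zero.mp this.symm).resolve_left (hp a haI).ne'
  have hR0 : c₁ * p a + c₂ * p b + c₃ * p c = 0 := by
    have := hfactR c le_rfl
    rw [hψc] at this
    exact (mul_eq_zero.mp this.symm).resolve_left (hq c hcI).ne'
  exact ⟨fun x _ hx => by rw [hfactL x hx, hL0, mul_zero],
    fun x _ hx => by rw [hfactR x hx, hR0, mul_zero]⟩
end

section
/- Let I ⊆ ℝ be an interval, let p, q : I → ℝ be strictly positive with p/q strictly increasing on I, and set k(x,y) = p(min(x,y))·q(max(x,y)). Let a < b < c be points of I and let K be the 3×3 matrix [k(x_i,x_j)] for (x₁,x₂,x₃) = (a,b,c). Then there exists a unique vector (c₁,c₂,c₃) ∈ ℝ³ with c₂ > 0 such that c₁·k(a,a) + c₂·k(b,a) + c₃·k(c,a) = 0, c₁·k(a,c) + c₂·k(b,c) + c₃·k(c,c) = 0, and (c₁,c₂,c₃)·K·(c₁,c₂,c₃)ᵀ = 1. -/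
open Finset

/-- For a one-dimensional Markov kernel
`k(x,y) = p(min(x,y)) * q(max(x,y))` on an interval `I ⊆ ℝ` (with `p, q` strictly
positive and `p/q` strictly increasing on `I`) and points `a < b < c` of `I`, there
is a unique vector `u = (c₁,c₂,c₃) ∈ ℝ³` with `c₂ > 0` solving the system
`c₁ k(a,a) + c₂ k(b,a) + c₃ k(c,a) = 0`, `c₁ k(a,c) + c₂ k(b,c) + c₃ k(c,c) = 0`,
and `uᵀ K u = 1` where `K = [k(xᵢ,xⱼ)]` for `(x₁,x₂,x₃) = (a,b,c)`. -/
theorem markov_three_point_system_unique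
    (I : Set ℝ) (hI : I.OrdConnected)
    (p q : ℝ → ℝ)
    (hp : ∀ x ∈ I, 0 < p x) (hq : ∀ x ∈ I, 0 < q x)
    (hpq : StrictMonoOn (fun x => p x / q x) I)
    (k : ℝ → ℝ → ℝ) (hk : ∀ x y, k x y = p (min x y) * q (max x y))
    (a b c : ℝ) (haI : a ∈ I) (hbI : b ∈ I) (hcI : c ∈ I)
    (hab : a < b) (hbc : b < c) :
    ∃! u : Fin 3 → ℝ, 0 < u 1 ∧
      u 0 * k a a + u 1 * k b a + u 2 * k c a = 0 ∧
      u 0 * k a c + u 1 * k b c + u 2 * k c c = 0 ∧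
      ∑ i : Fin 3, ∑ j : Fin 3, u i * k (![a, b, c] i) (![a, b, c] j) * u j = 1 := by
  have hac : a < c := hab.trans hbc
  have hpa := hp a haI; have hpb := hp b hbI; have hpc := hp c hcI
  have hqa := hq a haI; have hqb := hq b hbI; have hqc := hq c hcI
  have h1 : p a * q b < p b * q a := (div_lt_div_iff₀ hqa hqb).mp (hpq haI hbI hab)
  have h2 : p b * q c < p c * q b := (div_lt_div_iff₀ hqb hqc).mp (hpq hbI hcI hbc)
  have h3 : p a * q c < p c * q a := (div_lt_div_iff₀ hqa hqc).mp (hpq haI hcI hac)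
  set D : ℝ := q a * p c - p a * q c with hDdef
  have hD : 0 < D := by simp only [hDdef]; nlinarith
  set S : ℝ := (p c * q b - p b * q c) * (p b * q a - p a * q b) with hSdef
  have hS : 0 < S := mul_pos (by nlinarith) (by nlinarith)
  have hDS : 0 < D * S := mul_pos hD hS
  set t : ℝ := (Real.sqrt (D * S))⁻¹ with htdef
  have hst : 0 < Real.sqrt (D * S) := Real.sqrt_pos.mpr hDS
  have ht : 0 < t := inv_pos.mpr hst
  have ht2 : t * t * (D * S) = 1 := by
    rw [htdef, ← mul_inv, Real.mul_self_sqrt hDS.le]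
    exact inv_mul_cancel₀ hDS.ne'
  -- min/max simplifications
  have eab : min a b = a := min_eq_left hab.le
  have eab' : max a b = b := max_eq_right hab.le
  have eba : min b a = a := min_eq_right hab.le
  have eba' : max b a = b := max_eq_left hab.le
  have eac : min a c = a := min_eq_left hac.le
  have eac' : max a c = c := max_eq_right hac.le
  have eca : min c a = a := min_eq_right hac.le
  have eca' : max c a = c := max_eq_left hac.le
  have ebc : min b c = b := min_eq_left hbc.le
  have ebc' : max b c = c := max_eq_right hbc.le
  have ecb : min c b = b := min_eq_right hbc.le
  have ecb' : max c b = c := max_eq_left hbc.le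
  refine ⟨![t * -(q b * p c - p b * q c), t * D, t * -(q a * p b - p a * q b)],
    ⟨?_, ?_, ?_, ?_⟩, ?_⟩
  · simpa using mul_pos ht hD
  · simp only [hk, eab, eab', eba, eba', eac, eac', eca, eca', ebc, ebc', ecb, ecb',
      min_self, max_self, Matrix.cons_val_zero, Matrix.cons_val_one, Matrix.head_cons,
      Matrix.cons_val_two, Matrix.tail_cons, hDdef]
    ring
  · simp only [hk, eab, eab', eba, eba', eac, eac', eca, eca', ebc, ebc', ecb, ecb',
      min_self, max_self, Matrix.cons_val_zero, Matrix.cons_val_one, Matrix.head_cons,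
      Matrix.cons_val_two, Matrix.tail_cons, hDdef]
    ring
  · simp only [Fin.sum_univ_three, hk, eab, eab', eba, eba', eac, eac', eca, eca', ebc,
      ebc', ecb, ecb', min_self, max_self, Matrix.cons_val_zero, Matrix.cons_val_one,
      Matrix.head_cons, Matrix.cons_val_two, Matrix.tail_cons]
    linear_combination ht2
  · rintro v ⟨hv1, hveq1, hveq2, hveq3⟩
    simp only [hk, eab, eab', eba, eba', eac, eac', eca, eca', ebc, ebc', ecb, ecb',
      min_self, max_self] at hveq1 hveq2
    simp only [Fin.sum_univ_three, hk, eab, eab', eba, eba', eac, eac', eca, eca', ebc,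
      ebc', ecb, ecb', min_self, max_self, Matrix.cons_val_zero, Matrix.cons_val_one,
      Matrix.head_cons, Matrix.cons_val_two, Matrix.tail_cons] at hveq3
    have lin1 : v 0 * q a + v 1 * q b + v 2 * q c = 0 := by
      apply mul_left_cancel₀ hpa.ne'
      linear_combination hveq1
    have lin2 : v 0 * p a + v 1 * p b + v 2 * p c = 0 := by
      apply mul_left_cancel₀ hqc.ne'
      linear_combination hveq2
    have hv0 : v 0 * D = v 1 * -(q b * p c - p b * q c) := by
      simp only [hDdef]; linear_combination p c * lin1 - q c * lin2
    have hv2 : v 2 * D = v 1 * -(q a * p b - p a * q b) := by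
      simp only [hDdef]; linear_combination q a * lin2 - p a * lin1
    have hquad : v 1 ^ 2 * S = D := by
      simp only [hSdef]
      linear_combination D * hveq3 - D * v 0 * p a * lin1 - D * v 2 * q c * lin2 -
        v 1 * p a * q b * hv0 - v 1 * p b * q c * hv2
    have hu1 : (t * D) ^ 2 * S = D := by
      have : (t * D) ^ 2 * S = D * (t * t * (D * S)) := by ring
      rw [this, ht2, mul_one]
    have hv1u : v 1 = t * D := by
      have hsq : v 1 ^ 2 = (t * D) ^ 2 := by
        have := hquad.trans hu1.symm
        exact mul_right_cancel₀ hS.ne' this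
      have h1' := Real.sqrt_sq hv1.le
      have h2' := Real.sqrt_sq (mul_pos ht hD).le
      rw [← h1', hsq, h2']
    funext i
    fin_cases i
    · show v 0 = t * -(q b * p c - p b * q c)
      apply mul_right_cancel₀ hD.ne'
      linear_combination hv0 + -(q b * p c - p b * q c) * hv1u
    · show v 1 = t * D
      exact hv1u
    · show v 2 = t * -(q a * p b - p a * q b)
      apply mul_right_cancel₀ hD.ne'
      linear_combination hv2 + -(q a * p b - p a * q b) * hv1u
end

section
/- Fix L ≥ 1 and let S_L = {(ℓ,i) : 1 ≤ ℓ ≤ L, i odd, 1 ≤ i ≤ 2^ℓ − 1}, with associated points x_{ℓ,i} = i·2^{−ℓ} ∈ (0,1) and the linear (lexicographic) order (ℓ,i) ≤ (ℓ',i') iff ℓ < ℓ' or (ℓ = ℓ' and i ≤ i'). Let p, q : (0,1) → ℝ be strictly positive with p/q strictly increasing, set k(x,y) = p(min(x,y))·q(max(x,y)), and let K be the S_L × S_L matrix with entries K_{(ℓ,i),(ℓ',i')} = k(x_{ℓ,i}, x_{ℓ',i'}). Then there exists an S_L × S_L matrix C that is upper triangular with respect to the lexicographic order, has strictly positive diagonal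 entries, has at most 3 nonzero entries in each column, and satisfies Cᵀ·K·C = I. In particular the total number of nonzero entries of C is at most 3·|S_L|. -/
open Finset Matrix

/-!
For `s ≤ t` the kernel factorises as `k(s,t) = p(s) q(t)`, so to the left of a point `l < y`
the kernel column at `y` is a multiple of the column at `l`, and to the right of `r > y` a
multiple of the column at `r`; for `l < y < r` one combination of the columns at `l` and `r`
agrees with it outside `(l, r)`. Hence for every point `b`, subtracting from `e_b` a combination
of its nearest earlier neighbours on either side gives a vector `v_b` that is `K`-orthogonal
to all earlier points. The vectors `v_b` are the columns of a unit upper triangular `V` with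
`Vᵀ K V` diagonal and positive, and `C = V (Vᵀ K V)^{-1/2}` has at most three nonzero entries
per column. Odd numerators make the dyadic points pairwise distinct.
-/

theorem padicValNat_two_odd_mul_two_pow {i : ℕ} (hi : Odd i) (n : ℕ) :
    padicValNat 2 (i * 2 ^ n) = n := by
  rw [padicValNat.mul hi.pos.ne' (by positivity), padicValNat.prime_pow,
    padicValNat.eq_zero_of_not_dvd hi.not_two_dvd_nat, zero_add]

theorem eq_of_odd_div_two_pow_eq {i j m n : ℕ} (hi : Odd i) (hj : Odd j)
    (h : (i : ℝ) / 2 ^ m = j / 2 ^ n) : m = n ∧ i = j := by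
  rw [div_eq_div_iff (by positivity) (by positivity)] at h
  have hnat : i * 2 ^ n = j * 2 ^ m := by exact_mod_cast h
  obtain rfl : n = m := by
    rw [← padicValNat_two_odd_mul_two_pow hi n, hnat, padicValNat_two_odd_mul_two_pow hj]
  exact ⟨rfl, Nat.eq_of_mul_eq_mul_right (by positivity) hnat⟩

theorem div_two_pow_mem_Ioo {i m : ℕ} (h0 : 0 < i) (h : i < 2 ^ m) :
    (i : ℝ) / 2 ^ m ∈ Set.Ioo 0 1 :=
  ⟨by positivity, (div_lt_one (by positivity)).2 (by exact_mod_cast h)⟩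

theorem Matrix.card_ne_zero_le_of_col_card_le {m n R : Type*} [Fintype m] [Fintype n]
    [DecidableEq n] [Zero R] [DecidableEq R] (M : Matrix m n R) (k : ℕ)
    (hM : ∀ j, #{i | M i j ≠ 0} ≤ k) :
    #{ij : m × n | M ij.1 ij.2 ≠ 0} ≤ k * Fintype.card n := by
  refine card_le_mul_card_image_of_maps_to (f := Prod.snd) (fun _ _ => mem_univ _) k
    fun j _ => (card_le_card_of_injOn Prod.fst ?_ ?_).trans (hM j)
  · intro ij hij
    simp only [mem_coe, mem_filter, mem_univ, true_and] at hij ⊢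
    exact hij.2 ▸ hij.1
  · intro ij hij ij' hij' h
    simp only [mem_coe, mem_filter, mem_univ, true_and] at hij hij'
    exact Prod.ext h (hij.2.trans hij'.2.symm)

section InverseCholesky

variable {ι β : Type*} [Fintype ι] [LinearOrder β]

theorem dotProduct_mulVec_eq_of_triangular {key : ι → β} (hkey : Function.Injective key)
    {K : Matrix ι ι ℝ} {v : ι → ι → ℝ} (hv : ∀ a b, v b a ≠ 0 → key a ≤ key b)
    (hKv : ∀ a b, key a < key b → (K *ᵥ v b) a = 0) {a b : ι} (hab : key a ≤ key b) :
    v a ⬝ᵥ (K *ᵥ v b) = v a b * (K *ᵥ v b) b := by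
  refine Finset.sum_eq_single b (fun i _ hib => ?_) (by simp)
  by_cases hvi : v a i = 0
  · rw [hvi, zero_mul]
  · have hi : key i < key b := ((hv i a hvi).trans hab).lt_of_ne (hkey.ne hib)
    rw [hKv i b hi, mul_zero]

variable [DecidableEq ι]

theorem exists_inv_cholesky_of_columns {key : ι → β} (hkey : Function.Injective key)
    {K : Matrix ι ι ℝ} (hK : K.IsSymm) (v : ι → ι → ℝ) (hv_self : ∀ b, v b b = 1)
    (hv : ∀ a b, v b a ≠ 0 → key a ≤ key b)
    (hKv : ∀ a b, key a < key b → (K *ᵥ v b) a = 0) (hKv_pos : ∀ b, 0 < (K *ᵥ v b) b) :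
    ∃ C : Matrix ι ι ℝ, (∀ a b, C a b ≠ 0 → v b a ≠ 0) ∧ (∀ a, 0 < C a a) ∧
      Cᵀ * K * C = 1 := by
  set d : ι → ℝ := fun b => (K *ᵥ v b) b
  set V : Matrix ι ι ℝ := of fun a b => v b a
  have hgram : Vᵀ * K * V = diagonal d := by
    have hsymm : ∀ a b, v a ⬝ᵥ (K *ᵥ v b) = v b ⬝ᵥ (K *ᵥ v a) := fun a b => by
      rw [dotProduct_mulVec, ← vecMul_transpose, hK.eq, dotProduct_comm]
    have hzero : ∀ a b, key a < key b → v a ⬝ᵥ (K *ᵥ v b) = 0 := fun a b hab => by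
      rw [dotProduct_mulVec_eq_of_triangular hkey hv hKv hab.le,
        not_ne_iff.1 (mt (hv b a) hab.not_ge), zero_mul]
    ext a b
    have hentry : (Vᵀ * K * V) a b = v a ⬝ᵥ (K *ᵥ v b) := by
      simp only [V, Matrix.mul_apply, transpose_apply, of_apply, dotProduct, mulVec,
        Finset.mul_sum, Finset.sum_mul]
      rw [Finset.sum_comm]
      simp only [mul_assoc]
    rw [hentry]
    rcases lt_trichotomy (key a) (key b) with hab | hab | hab
    · rw [hzero a b hab, diagonal_apply_ne _ (hkey.ne_iff.1 hab.ne)]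
    · obtain rfl := hkey hab
      rw [dotProduct_mulVec_eq_of_triangular hkey hv hKv le_rfl, hv_self, one_mul,
        diagonal_apply_eq]
    · rw [hsymm, hzero b a hab, diagonal_apply_ne _ (hkey.ne_iff.1 hab.ne')]
  set D : Matrix ι ι ℝ := diagonal fun b => (√(d b))⁻¹
  have hC : ∀ a b, (V * D) a b = v b a * (√(d b))⁻¹ := fun a b => mul_diagonal _ _ _ _
  refine ⟨V * D, fun a b h => left_ne_zero_of_mul (hC a b ▸ h), fun a => ?_, ?_⟩
  · rw [hC, hv_self, one_mul]
    exact inv_pos.2 (Real.sqrt_pos.2 (hKv_pos a))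
  · have hDt : Dᵀ = D := diagonal_transpose _
    rw [show (V * D)ᵀ * K * (V * D) = D * (Vᵀ * K * V) * D by
        simp only [transpose_mul, hDt, Matrix.mul_assoc],
      hgram, diagonal_mul_diagonal, diagonal_mul_diagonal, ← diagonal_one]
    congr 1
    funext b
    have hd : 0 < d b := hKv_pos b
    have := (Real.sqrt_pos.2 hd).ne'
    field_simp
    rw [Real.sq_sqrt hd.le]

end InverseCholesky

theorem mul_lt_mul_of_strictMonoOn_div {p q : ℝ → ℝ} {s : Set ℝ} (hq : ∀ x ∈ s, 0 < q x)
    (hpq : StrictMonoOn (fun x => p x / q x) s) {x y : ℝ} (hx : x ∈ s) (hy : y ∈ s)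
    (hxy : x < y) : p x * q y < p y * q x :=
  (div_lt_div_iff₀ (hq x hx) (hq y hy)).1 (hpq hx hy hxy)

def markovKernel (p q : ℝ → ℝ) (x y : ℝ) : ℝ := p (min x y) * q (max x y)

namespace markovKernel

variable {p q : ℝ → ℝ} {s : Set ℝ}

theorem symm (x y : ℝ) : markovKernel p q x y = markovKernel p q y x := by
  rw [markovKernel, markovKernel, min_comm, max_comm]

theorem of_le {x y : ℝ} (h : x ≤ y) : markovKernel p q x y = p x * q y := by
  rw [markovKernel, min_eq_left h, max_eq_right h]

theorem of_ge {x y : ℝ} (h : y ≤ x) : markovKernel p q x y = p y * q x := by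
  rw [symm, of_le h]

theorem self_pos (hp : ∀ x ∈ s, 0 < p x) (hq : ∀ x ∈ s, 0 < q x) {x : ℝ} (hx : x ∈ s) :
    0 < markovKernel p q x x := by
  simpa [markovKernel] using mul_pos (hp x hx) (hq x hx)

theorem exists_screen_left (hq : ∀ x ∈ s, 0 < q x)
    (hpq : StrictMonoOn (fun x => p x / q x) s) {l y : ℝ} (hl : l ∈ s) (hy : y ∈ s)
    (hly : l < y) :
    ∃ α : ℝ, (∀ t ≤ l, markovKernel p q t y + α * markovKernel p q t l = 0) ∧
      0 < markovKernel p q y y + α * markovKernel p q y l := by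
  have hql := (hq l hl).ne'
  refine ⟨-(q y / q l), fun t ht => ?_, ?_⟩
  · rw [of_le (ht.trans hly.le), of_le ht]
    field_simp
    ring
  · rw [of_le le_rfl, of_ge hly.le]
    have h := sub_pos.2 (mul_lt_mul_of_strictMonoOn_div hq hpq hl hy hly)
    refine (div_pos (mul_pos (hq y hy) h) (hq l hl)).trans_eq ?_
    field_simp
    ring

theorem exists_screen_right (hp : ∀ x ∈ s, 0 < p x) (hq : ∀ x ∈ s, 0 < q x)
    (hpq : StrictMonoOn (fun x => p x / q x) s) {y r : ℝ} (hy : y ∈ s) (hr : r ∈ s)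
    (hyr : y < r) :
    ∃ β : ℝ, (∀ t, r ≤ t → markovKernel p q t y + β * markovKernel p q t r = 0) ∧
      0 < markovKernel p q y y + β * markovKernel p q y r := by
  have hpr := (hp r hr).ne'
  refine ⟨-(p y / p r), fun t ht => ?_, ?_⟩
  · rw [of_ge (hyr.le.trans ht), of_ge ht]
    field_simp
    ring
  · rw [of_le le_rfl, of_le hyr.le]
    have h := sub_pos.2 (mul_lt_mul_of_strictMonoOn_div hq hpq hy hr hyr)
    refine (div_pos (mul_pos (hp y hy) h) (hp r hr)).trans_eq ?_
    field_simp
    ring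

theorem exists_screen (hq : ∀ x ∈ s, 0 < q x) (hpq : StrictMonoOn (fun x => p x / q x) s)
    {l y r : ℝ} (hl : l ∈ s) (hy : y ∈ s) (hr : r ∈ s) (hly : l < y) (hyr : y < r) :
    ∃ α β : ℝ, (∀ t, t ≤ l ∨ r ≤ t →
        markovKernel p q t y + (α * markovKernel p q t l + β * markovKernel p q t r) = 0) ∧
      0 < markovKernel p q y y + (α * markovKernel p q y l + β * markovKernel p q y r) := by
  set D := p r * q l - p l * q r
  have hD : 0 < D := sub_pos.2 (mul_lt_mul_of_strictMonoOn_div hq hpq hl hr (hly.trans hyr))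
  -- `α, β` solve `q y + α q l + β q r = 0` and `p y + α p l + β p r = 0` (Cramer's rule).
  refine ⟨-((p r * q y - p y * q r) / D), -((p y * q l - p l * q y) / D), ?_, ?_⟩
  · rintro t (ht | ht)
    · rw [of_le (ht.trans hly.le), of_le ht, of_le (ht.trans (hly.trans hyr).le)]
      field_simp
      ring
    · rw [of_ge (hyr.le.trans ht), of_ge ((hly.trans hyr).le.trans ht), of_ge ht]
      field_simp
      ring
  · rw [of_le le_rfl, of_ge hly.le, of_le hyr.le]
    have h1 := sub_pos.2 (mul_lt_mul_of_strictMonoOn_div hq hpq hy hr hyr)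
    have h2 := sub_pos.2 (mul_lt_mul_of_strictMonoOn_div hq hpq hl hy hly)
    refine (div_pos (mul_pos h1 h2) hD).trans_eq ?_
    field_simp
    ring

end markovKernel

def markovMatrix {ι : Type*} (p q : ℝ → ℝ) (x : ι → ℝ) : Matrix ι ι ℝ :=
  of fun a b => markovKernel p q (x a) (x b)

namespace markovMatrix

variable {ι : Type*} {p q : ℝ → ℝ} {x : ι → ℝ}

@[simp]
theorem apply (a b : ι) : markovMatrix p q x a b = markovKernel p q (x a) (x b) := rfl

theorem isSymm : (markovMatrix p q x).IsSymm :=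
  ext fun a b => markovKernel.symm (x b) (x a)

variable [Fintype ι] [DecidableEq ι] {s : Set ℝ}

theorem exists_screening_correction (hp : ∀ x ∈ s, 0 < p x) (hq : ∀ x ∈ s, 0 < q x)
    (hpq : StrictMonoOn (fun x => p x / q x) s) (hx : ∀ a, x a ∈ s) (P : Finset ι) (b : ι)
    (hP : ∀ a ∈ P, x a ≠ x b) :
    ∃ N ⊆ P, #N ≤ 2 ∧ ∃ c : ι → ℝ, (∀ a ∉ N, c a = 0) ∧
      (∀ a ∈ P, (markovMatrix p q x *ᵥ (Pi.single b 1 + c)) a = 0) ∧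
      0 < (markovMatrix p q x *ᵥ (Pi.single b 1 + c)) b := by
  set Pl := P.filter fun a => x a < x b
  set Pr := P.filter fun a => x b < x a
  have hLR : ∀ a ∈ P, a ∈ Pl ∨ a ∈ Pr := fun a ha =>
    (hP a ha).lt_or_gt.imp (fun h => mem_filter.2 ⟨ha, h⟩) (fun h => mem_filter.2 ⟨ha, h⟩)
  -- `N` consists of the nearest points of `P` to the left and to the right of `x b`.
  rcases Pl.eq_empty_or_nonempty with hL | hL <;> rcases Pr.eq_empty_or_nonempty with hR | hR
  · refine ⟨∅, empty_subset _, by simp, 0, fun _ _ => rfl, fun a ha => ?_, ?_⟩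
    · simpa [hL, hR] using hLR a ha
    · simpa using markovKernel.self_pos hp hq (hx b)
  · obtain ⟨r, hrR, hr_min⟩ := Pr.exists_min_image x hR
    obtain ⟨hrP, hbr⟩ := mem_filter.1 hrR
    obtain ⟨β, hβ, hβ_pos⟩ := markovKernel.exists_screen_right hp hq hpq (hx b) (hx r) hbr
    refine ⟨{r}, by simpa, by simp, Pi.single r β, fun a ha => by simp_all, fun a ha => ?_,
      ?_⟩
    · rcases hLR a ha with h | h
      · simp [hL] at h
      · simpa [mulVec_add] using hβ (x a) (hr_min a h)
    · simpa [mulVec_add] using hβ_pos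
  · obtain ⟨l, hlL, hl_max⟩ := Pl.exists_max_image x hL
    obtain ⟨hlP, hlb⟩ := mem_filter.1 hlL
    obtain ⟨α, hα, hα_pos⟩ := markovKernel.exists_screen_left hq hpq (hx l) (hx b) hlb
    refine ⟨{l}, by simpa, by simp, Pi.single l α, fun a ha => by simp_all, fun a ha => ?_,
      ?_⟩
    · rcases hLR a ha with h | h
      · simpa [mulVec_add] using hα (x a) (hl_max a h)
      · simp [hR] at h
    · simpa [mulVec_add] using hα_pos
  · obtain ⟨l, hlL, hl_max⟩ := Pl.exists_max_image x hL
    obtain ⟨hlP, hlb⟩ := mem_filter.1 hlL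
    obtain ⟨r, hrR, hr_min⟩ := Pr.exists_min_image x hR
    obtain ⟨hrP, hbr⟩ := mem_filter.1 hrR
    obtain ⟨α, β, hαβ, hαβ_pos⟩ :=
      markovKernel.exists_screen hq hpq (hx l) (hx b) (hx r) hlb hbr
    refine ⟨{l, r}, by simp [insert_subset_iff, hlP, hrP], card_le_two,
      Pi.single l α + Pi.single r β, fun a ha => by simp_all, fun a ha => ?_, ?_⟩
    · simpa [mulVec_add] using hαβ (x a) ((hLR a ha).imp (hl_max a) (hr_min a))
    · simpa [mulVec_add] using hαβ_pos

theorem exists_sparse_column (hp : ∀ x ∈ s, 0 < p x) (hq : ∀ x ∈ s, 0 < q x)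
    (hpq : StrictMonoOn (fun x => p x / q x) s) (hx : ∀ a, x a ∈ s) (P : Finset ι) (b : ι)
    (hP : ∀ a ∈ P, x a ≠ x b) :
    ∃ v : ι → ℝ, v b = 1 ∧ (∀ a, v a ≠ 0 → a = b ∨ a ∈ P) ∧ #{a | v a ≠ 0} ≤ 3 ∧
      (∀ a ∈ P, (markovMatrix p q x *ᵥ v) a = 0) ∧ 0 < (markovMatrix p q x *ᵥ v) b := by
  obtain ⟨N, hNP, hN, c, hc, hzero, hpos⟩ := exists_screening_correction hp hq hpq hx P b hP
  have hbN : b ∉ N := fun hb => hP b (hNP hb) rfl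
  have hsupp : ∀ a, (Pi.single b 1 + c : ι → ℝ) a ≠ 0 → a ∈ insert b N := fun a ha => by
    by_contra h
    rw [mem_insert, not_or] at h
    simp [h.1, hc a h.2] at ha
  refine ⟨Pi.single b 1 + c, by simp [hc b hbN], fun a ha => ?_, ?_, hzero, hpos⟩
  · exact (mem_insert.1 (hsupp a ha)).imp_right (@hNP a)
  · calc #{a | (Pi.single b 1 + c : ι → ℝ) a ≠ 0} ≤ #(insert b N) :=
          card_le_card fun a ha => hsupp a (mem_filter.1 ha).2
      _ ≤ 3 := (card_insert_le b N).trans (by omega)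

end markovMatrix

theorem dyadic_inverse_cholesky_sparse_general
    (L : ℕ)
    (p q : ℝ → ℝ)
    (hp : ∀ x ∈ Set.Ioo (0 : ℝ) 1, 0 < p x)
    (hq : ∀ x ∈ Set.Ioo (0 : ℝ) 1, 0 < q x)
    (hpq : StrictMonoOn (fun x => p x / q x) (Set.Ioo (0 : ℝ) 1))
    (S : Finset (ℕ × ℕ))
    (hS : ∀ v : ℕ × ℕ, v ∈ S ↔ 1 ≤ v.1 ∧ v.1 ≤ L ∧ Odd v.2 ∧ 1 ≤ v.2 ∧ v.2 ≤ 2 ^ v.1 - 1)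
    (pt : ℕ × ℕ → ℝ) (hpt : ∀ v, pt v = (v.2 : ℝ) / 2 ^ v.1)
    (K : Matrix ↥S ↥S ℝ)
    (hK : ∀ a b : ↥S, K a b = p (min (pt a.1) (pt b.1)) * q (max (pt a.1) (pt b.1))) :
    ∃ C : Matrix ↥S ↥S ℝ,
      (∀ a b : ↥S, (b.1.1 < a.1.1 ∨ (b.1.1 = a.1.1 ∧ b.1.2 < a.1.2)) → C a b = 0) ∧
      (∀ a : ↥S, 0 < C a a) ∧
      (∀ b : ↥S, (Finset.univ.filter fun a : ↥S => C a b ≠ 0).card ≤ 3) ∧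
      Cᵀ * K * C = 1 ∧
      (Finset.univ.filter fun ab : ↥S × ↥S => C ab.1 ab.2 ≠ 0).card ≤ 3 * S.card := by
  set x : ↥S → ℝ := fun a => pt a.1
  have hKx : K = markovMatrix p q x := ext hK
  have hx : ∀ a, x a ∈ Set.Ioo 0 1 := fun a => by
    obtain ⟨-, -, -, h1, h2⟩ := (hS a.1).1 a.2
    have hlt : a.1.2 < 2 ^ a.1.1 := (Nat.le_pred_iff_lt (by positivity)).1 h2
    simpa [x, hpt] using div_two_pow_mem_Ioo (by omega) hlt
  have hx_inj : Function.Injective x := fun a b h => by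
    have hodd : ∀ c : ↥S, Odd c.1.2 := fun c => ((hS c.1).1 c.2).2.2.1
    obtain ⟨h1, h2⟩ := eq_of_odd_div_two_pow_eq (hodd a) (hodd b) (by simpa [x, hpt] using h)
    exact Subtype.ext (Prod.ext h1 h2)
  set key : ↥S → ℕ ×ₗ ℕ := fun a => toLex a.1
  have hkey : Function.Injective key := toLex.injective.comp Subtype.val_injective
  choose v hv_self hv_supp hv_card hv_zero hv_pos using fun b =>
    markovMatrix.exists_sparse_column hp hq hpq hx {a | key a < key b} b
      fun a ha => hx_inj.ne fun h => (mem_filter.1 ha).2.ne (congrArg key h)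
  have hv_le : ∀ a b, v b a ≠ 0 → key a ≤ key b := fun a b h =>
    (hv_supp b a h).elim (fun h => h ▸ le_rfl) fun h => (mem_filter.1 h).2.le
  obtain ⟨C, hCv, hC_pos, hC⟩ := exists_inv_cholesky_of_columns hkey markovMatrix.isSymm v
    hv_self hv_le (fun a b h => hv_zero b a (mem_filter.2 ⟨mem_univ a, h⟩)) hv_pos
  have hcol : ∀ b, #{a | C a b ≠ 0} ≤ 3 := fun b =>
    (card_le_card (monotone_filter_right _ fun a _ => hCv a b)).trans (hv_card b)
  refine ⟨C, fun a b hab => ?_, hC_pos, hcol, hKx ▸ hC, ?_⟩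
  · by_contra h
    exact (Prod.Lex.toLex_lt_toLex.2 hab).not_ge (hv_le a b (hCv a b h))
  · simpa using C.card_ne_zero_le_of_col_card_le 3 hcol

/-- Let `S_L` be the set of dyadic level-index pairs `(ℓ,i)` with
`1 ≤ ℓ ≤ L`, `i` odd, `1 ≤ i ≤ 2^ℓ - 1`, with points `x_{ℓ,i} = i·2^{-ℓ}`, and let
`K` be the Markov-kernel matrix on these points. Then there is a matrix `C`, upper
triangular for the lexicographic order on `(ℓ,i)`, with strictly positive diagonal,
at most `3` nonzero entries per column, and `Cᵀ K C = 1`; in particular `C` has at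
most `3·|S_L|` nonzero entries. -/
theorem dyadic_inverse_cholesky_sparse
    (L : ℕ) (hL : 1 ≤ L)
    (p q : ℝ → ℝ)
    (hp : ∀ x ∈ Set.Ioo (0 : ℝ) 1, 0 < p x)
    (hq : ∀ x ∈ Set.Ioo (0 : ℝ) 1, 0 < q x)
    (hpq : StrictMonoOn (fun x => p x / q x) (Set.Ioo (0 : ℝ) 1))
    (S : Finset (ℕ × ℕ))
    (hS : ∀ v : ℕ × ℕ, v ∈ S ↔ 1 ≤ v.1 ∧ v.1 ≤ L ∧ Odd v.2 ∧ 1 ≤ v.2 ∧ v.2 ≤ 2 ^ v.1 - 1)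
    (pt : ℕ × ℕ → ℝ) (hpt : ∀ v, pt v = (v.2 : ℝ) / 2 ^ v.1)
    (K : Matrix ↥S ↥S ℝ)
    (hK : ∀ a b : ↥S, K a b = p (min (pt a.1) (pt b.1)) * q (max (pt a.1) (pt b.1))) :
    ∃ C : Matrix ↥S ↥S ℝ,
      (∀ a b : ↥S, (b.1.1 < a.1.1 ∨ (b.1.1 = a.1.1 ∧ b.1.2 < a.1.2)) → C a b = 0) ∧
      (∀ a : ↥S, 0 < C a a) ∧
      (∀ b : ↥S, (Finset.univ.filter fun a : ↥S => C a b ≠ 0).card ≤ 3) ∧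
      Cᵀ * K * C = 1 ∧
      (Finset.univ.filter fun ab : ↥S × ↥S => C ab.1 ab.2 ≠ 0).card ≤ 3 * S.card :=
  dyadic_inverse_cholesky_sparse_general L p q hp hq hpq S hS pt hpt K hK
end

section
/- Fix L ≥ 1 and let S_L = {(ℓ,i) : 1 ≤ ℓ ≤ L, i odd, 1 ≤ i ≤ 2^ℓ − 1}, with points x_{ℓ,i} = i·2^{−ℓ} ∈ (0,1) ordered lexicographically by (ℓ,i). Let p, q : (0,1) → ℝ be strictly positive with p/q strictly increasing, set k(x,y) = p(min(x,y))·q(max(x,y)), and let K be the S_L × S_L matrix K_{(ℓ,i),(ℓ',i')} = k(x_{ℓ,i}, x_{ℓ',i'}). Then there exists an S_L × S_L matrix C, upper triangular with respect to the lexicographic order, with at most 3 nonzero entries per column and Cᵀ·K·C = I, such that additionally for every x ∈ (0,1) the hierarchical feature vector φ(x) defined by φ_{(ℓ,i)}(x) = Σ_{(ℓ',i') ∈ S_L} k(x, x_{ℓ',i'})·C_{(ℓ',i'),(ℓ,i)} has at most L nonzero entries; more precisely, φ_{(ℓ,i)}(x) ≠ 0 implies (i−1)·2^{−ℓ} < x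 < (i+1)·2^{−ℓ}. -/
/-!
Write `D(x, y) = p x * q y - p y * q x` and let `a < m < b` be the endpoints and the midpoint of a
dyadic cell. For `x` outside `(a, b)`, the vector `(k(x, a), k(x, m), k(x, b))` is `p x • q` or
`q x • p` restricted to `a, m, b`, and the cofactor vector `(D(m, b), -D(a, b), D(a, m))` annihilates
both; so the hat function `D(m, b) k(·, a) - D(a, b) k(·, m) + D(a, m) k(·, b)` is supported in the
cell, and at `m` it equals `D(a, m) D(m, b)`. The endpoints are grid points of coarser level (or `0`,
`1`), so these coefficients form a column of `C` with at most three entries. Pairing the hat of `u`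
with the column of a no finer index `v`, the three points of `v` lie outside the cell of `u` unless
`v = u`; with the symmetry of `K` this gives `Cᵀ K C = 1` once the columns are scaled, which is
possible because `p / q` increasing makes every `D(x, y)` with `x < y` negative. Open cells of one
level are disjoint, which bounds the number of nonzero features by `L`.
-/

open Finset Matrix

namespace HierarchicalFeatures

noncomputable section

section Kernel

variable (P Q : ℝ → ℝ)

def minMaxKernel (x y : ℝ) : ℝ := P (min x y) * Q (max x y)

def cross (x y : ℝ) : ℝ := P x * Q y - P y * Q x

def hat (a m b x : ℝ) : ℝ :=
  cross P Q m b * minMaxKernel P Q x a - cross P Q a b * minMaxKernel P Q x m +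
    cross P Q a m * minMaxKernel P Q x b

def hatCoeff (a m b y : ℝ) : ℝ :=
  (if y = a then cross P Q m b else 0) - (if y = m then cross P Q a b else 0) +
    (if y = b then cross P Q a m else 0)

def normConst (a m b : ℝ) : ℝ :=
  (√(-cross P Q a b * (cross P Q a m * cross P Q m b)))⁻¹

variable {P Q} {a m b x y : ℝ}

lemma minMaxKernel_comm (x y : ℝ) : minMaxKernel P Q x y = minMaxKernel P Q y x := by
  rw [minMaxKernel, minMaxKernel, min_comm, max_comm]

lemma minMaxKernel_of_le (h : x ≤ y) : minMaxKernel P Q x y = P x * Q y := by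
  rw [minMaxKernel, min_eq_left h, max_eq_right h]

lemma minMaxKernel_of_ge (h : y ≤ x) : minMaxKernel P Q x y = P y * Q x := by
  rw [minMaxKernel_comm, minMaxKernel_of_le h]

lemma hat_eq_zero_of_le (hxa : x ≤ a) (ham : a ≤ m) (hmb : m ≤ b) : hat P Q a m b x = 0 := by
  rw [hat, minMaxKernel_of_le hxa, minMaxKernel_of_le (hxa.trans ham),
    minMaxKernel_of_le ((hxa.trans ham).trans hmb)]
  simp only [cross]
  ring

lemma hat_eq_zero_of_ge (hbx : b ≤ x) (ham : a ≤ m) (hmb : m ≤ b) : hat P Q a m b x = 0 := by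
  rw [hat, minMaxKernel_of_ge hbx, minMaxKernel_of_ge (hmb.trans hbx),
    minMaxKernel_of_ge ((ham.trans hmb).trans hbx)]
  simp only [cross]
  ring

lemma hat_eq_zero_of_notMem (hx : x ∉ Set.Ioo a b) (ham : a ≤ m) (hmb : m ≤ b) :
    hat P Q a m b x = 0 := by
  rcases not_and_or.1 hx with hxa | hbx
  · exact hat_eq_zero_of_le (not_lt.1 hxa) ham hmb
  · exact hat_eq_zero_of_ge (not_lt.1 hbx) ham hmb

lemma hat_mid (ham : a ≤ m) (hmb : m ≤ b) :
    hat P Q a m b m = cross P Q a m * cross P Q m b := by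
  rw [hat, minMaxKernel_of_ge ham, minMaxKernel_of_le le_rfl, minMaxKernel_of_le hmb]
  simp only [cross]
  ring

lemma eq_or_eq_or_eq_of_hatCoeff_ne_zero (h : hatCoeff P Q a m b y ≠ 0) :
    y = a ∨ y = m ∨ y = b := by
  by_contra! hy
  simp [hatCoeff, hy.1, hy.2.1, hy.2.2] at h

lemma sum_mul_hatCoeff (T : Finset ℝ) (f : ℝ → ℝ) (ha : a ∈ T ∨ f a = 0)
    (hm : m ∈ T ∨ f m = 0) (hb : b ∈ T ∨ f b = 0) :
    ∑ y ∈ T, f y * hatCoeff P Q a m b y =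
      cross P Q m b * f a - cross P Q a b * f m + cross P Q a m * f b := by
  have pick : ∀ {c : ℝ} (r : ℝ), c ∈ T ∨ f c = 0 →
      ∑ y ∈ T, f y * (if y = c then r else 0) = r * f c := by
    intro c r hc
    simp only [mul_ite, mul_zero, sum_ite_eq']
    rcases hc with hc | hc <;> simp [hc, mul_comm]
  simp only [hatCoeff, mul_add, mul_sub, sum_add_distrib, sum_sub_distrib, pick _ ha, pick _ hm,
    pick _ hb]

lemma normConst_mul_self_mul (hab : cross P Q a b < 0) (ham : cross P Q a m < 0)
    (hmb : cross P Q m b < 0) :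
    normConst P Q a m b * normConst P Q a m b *
      (-cross P Q a b * (cross P Q a m * cross P Q m b)) = 1 := by
  have hpos : 0 < -cross P Q a b * (cross P Q a m * cross P Q m b) :=
    mul_pos (neg_pos.2 hab) (mul_pos_of_neg_of_neg ham hmb)
  rw [normConst, ← mul_inv, Real.mul_self_sqrt hpos.le, inv_mul_cancel₀ hpos.ne']

lemma cross_neg_of_strictMonoOn {s : Set ℝ} (hQ : ∀ x ∈ s, 0 < Q x)
    (hPQ : StrictMonoOn (fun x => P x / Q x) s) (hx : x ∈ s) (hy : y ∈ s) (hxy : x < y) :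
    cross P Q x y < 0 := by
  have h := hPQ hx hy hxy
  rw [div_lt_div_iff₀ (hQ x hx) (hQ y hy)] at h
  rw [cross]
  linarith

end Kernel

section Extension

/- Extending `p, q` by `p 0 = 0, q 0 = 1, p 1 = 1, q 1 = 0` makes `k(·, 0)` and `k(·, 1)` vanish
on `[0, 1]`, so the cell endpoints `0` and `1` behave like grid points in every sum below. -/
def extendP (p : ℝ → ℝ) (x : ℝ) : ℝ := if x = 0 then 0 else if x = 1 then 1 else p x

def extendQ (q : ℝ → ℝ) (x : ℝ) : ℝ := if x = 0 then 1 else if x = 1 then 0 else q x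

variable {p q : ℝ → ℝ} {x y : ℝ}

lemma extendP_of_mem (hx : x ∈ Set.Ioo (0 : ℝ) 1) : extendP p x = p x := by
  simp [extendP, hx.1.ne', hx.2.ne]

lemma extendQ_of_mem (hx : x ∈ Set.Ioo (0 : ℝ) 1) : extendQ q x = q x := by
  simp [extendQ, hx.1.ne', hx.2.ne]

lemma minMaxKernel_extend_of_mem (hx : x ∈ Set.Ioo (0 : ℝ) 1) (hy : y ∈ Set.Ioo (0 : ℝ) 1) :
    minMaxKernel (extendP p) (extendQ q) x y = minMaxKernel p q x y := by
  rw [minMaxKernel, minMaxKernel, extendP_of_mem, extendQ_of_mem]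
  · rcases le_total x y with h | h <;> simp [h, hx, hy]
  · rcases le_total x y with h | h <;> simp [h, hx, hy]

lemma minMaxKernel_extend_zero (hx : 0 ≤ x) : minMaxKernel (extendP p) (extendQ q) x 0 = 0 := by
  simp [minMaxKernel_of_ge hx, extendP]

lemma minMaxKernel_extend_one (hx : x ≤ 1) : minMaxKernel (extendP p) (extendQ q) x 1 = 0 := by
  simp [minMaxKernel_of_le hx, extendQ]

lemma cross_extend_neg (hp : ∀ x ∈ Set.Ioo (0 : ℝ) 1, 0 < p x)
    (hq : ∀ x ∈ Set.Ioo (0 : ℝ) 1, 0 < q x)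
    (hpq : StrictMonoOn (fun x => p x / q x) (Set.Ioo (0 : ℝ) 1))
    (h0 : 0 ≤ x) (hxy : x < y) (h1 : y ≤ 1) : cross (extendP p) (extendQ q) x y < 0 := by
  rcases h0.eq_or_lt with rfl | hx0
  · rcases h1.eq_or_lt with rfl | hy1
    · norm_num [cross, extendP, extendQ]
    · simp [cross, extendP, extendQ, hxy.ne', hy1.ne, hp y ⟨hxy, hy1⟩]
  · rcases h1.eq_or_lt with rfl | hy1
    · simp [cross, extendP, extendQ, hx0.ne', hxy.ne, hq x ⟨hx0, hxy⟩]
    · have hxI : x ∈ Set.Ioo (0 : ℝ) 1 := ⟨hx0, hxy.trans hy1⟩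
      have hyI : y ∈ Set.Ioo (0 : ℝ) 1 := ⟨hx0.trans hxy, hy1⟩
      have h := cross_neg_of_strictMonoOn hq hpq hxI hyI hxy
      rwa [cross, ← extendP_of_mem (p := p) hxI, ← extendP_of_mem (p := p) hyI,
        ← extendQ_of_mem (q := q) hxI, ← extendQ_of_mem (q := q) hyI] at h

end Extension

section Dyadic

def IsDyadicIndex (L : ℕ) (v : ℕ × ℕ) : Prop :=
  1 ≤ v.1 ∧ v.1 ≤ L ∧ Odd v.2 ∧ 1 ≤ v.2 ∧ v.2 ≤ 2 ^ v.1 - 1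

def dyadicPt (v : ℕ × ℕ) : ℝ := (v.2 : ℝ) / 2 ^ v.1

def cellLeft (v : ℕ × ℕ) : ℝ := ((v.2 : ℝ) - 1) / 2 ^ v.1

def cellRight (v : ℕ × ℕ) : ℝ := ((v.2 : ℝ) + 1) / 2 ^ v.1

def dyadicCell (v : ℕ × ℕ) : Set ℝ := Set.Ioo (cellLeft v) (cellRight v)

variable {L ℓ m n : ℕ} {u v w : ℕ × ℕ} {x : ℝ}

lemma div_two_pow_eq_div_two_pow_iff {a b : ℕ} (h : a ≤ b) :
    (m : ℝ) / 2 ^ a = n / 2 ^ b ↔ m * 2 ^ (b - a) = n := by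
  obtain ⟨d, rfl⟩ := Nat.exists_eq_add_of_le h
  rw [Nat.add_sub_cancel_left, pow_add, div_eq_div_iff (by positivity) (by positivity),
    ← Nat.cast_inj (R := ℝ), mul_left_comm, mul_comm (n : ℝ)]
  push_cast
  exact mul_right_inj' (by positivity)

lemma eq_zero_of_odd_mul_two_pow {d : ℕ} (h : Odd (m * 2 ^ d)) : d = 0 := by
  by_contra hd
  exact Nat.not_even_iff_odd.2 h ((Nat.even_pow.2 ⟨even_two, hd⟩).mul_left m)

lemma dyadicPt_injOn : Set.InjOn dyadicPt {v | Odd v.2} := by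
  intro v hv w hw h
  wlog hle : v.1 ≤ w.1 generalizing v w
  · exact (this hw hv h.symm (le_of_not_ge hle)).symm
  have hvw := (div_two_pow_eq_div_two_pow_iff hle).1 h
  have hd := eq_zero_of_odd_mul_two_pow (hvw ▸ hw : Odd (v.2 * 2 ^ (w.1 - v.1)))
  exact Prod.ext (by omega) (by simpa [hd] using hvw)

lemma mem_dyadicCell_iff :
    x ∈ dyadicCell v ↔ (v.2 : ℝ) - 1 < x * 2 ^ v.1 ∧ x * 2 ^ v.1 < v.2 + 1 := by
  rw [dyadicCell, cellLeft, cellRight, Set.mem_Ioo, div_lt_iff₀ (by positivity),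
    lt_div_iff₀ (by positivity)]

lemma mul_two_pow_eq_of_mem_dyadicCell (hℓ : ℓ ≤ v.1)
    (h : (n : ℝ) / 2 ^ ℓ ∈ dyadicCell v) : n * 2 ^ (v.1 - ℓ) = v.2 := by
  rw [(div_two_pow_eq_div_two_pow_iff hℓ).2 rfl, mem_dyadicCell_iff,
    div_mul_cancel₀ _ (by positivity)] at h
  set N := n * 2 ^ (v.1 - ℓ)
  obtain ⟨h₁, h₂⟩ := h
  have h₁' : v.2 < N + 1 := by exact_mod_cast (by linarith : (v.2 : ℝ) < N + 1)
  have h₂' : N < v.2 + 1 := by exact_mod_cast h₂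
  omega

lemma div_two_pow_notMem_dyadicCell (hv : Odd v.2) (hℓ : ℓ ≤ v.1) (hn : Even n) :
    (n : ℝ) / 2 ^ ℓ ∉ dyadicCell v := fun h =>
  Nat.not_even_iff_odd.2 hv (mul_two_pow_eq_of_mem_dyadicCell hℓ h ▸ hn.mul_right _)

lemma lt_of_dyadicPt_eq_div (hv : Odd v.2) (hn : Even n) (h : dyadicPt v = n / 2 ^ ℓ) :
    v.1 < ℓ := by
  by_contra! hle
  have hvn := (div_two_pow_eq_div_two_pow_iff hle).1 h.symm
  exact Nat.not_even_iff_odd.2 hv (hvn ▸ hn.mul_right _)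

lemma eq_of_dyadicPt_mem_dyadicCell (hv : Odd v.2) (hle : w.1 ≤ v.1)
    (h : dyadicPt w ∈ dyadicCell v) : w = v := by
  have hwv := mul_two_pow_eq_of_mem_dyadicCell hle h
  have hd := eq_zero_of_odd_mul_two_pow (hwv ▸ hv : Odd (w.2 * 2 ^ (v.1 - w.1)))
  exact Prod.ext (by omega) (by simpa [hd] using hwv)

lemma eq_of_mem_dyadicCell_of_fst_eq (hv : Odd v.2) (hw : Odd w.2) (hvx : x ∈ dyadicCell v)
    (hwx : x ∈ dyadicCell w) (h : v.1 = w.1) : v = w := by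
  rw [mem_dyadicCell_iff] at hvx hwx
  rw [h] at hvx
  have h₁ : v.2 < w.2 + 2 := by exact_mod_cast (by linarith : (v.2 : ℝ) < w.2 + 2)
  have h₂ : w.2 < v.2 + 2 := by exact_mod_cast (by linarith : (w.2 : ℝ) < v.2 + 2)
  obtain ⟨i, hi⟩ := hv
  obtain ⟨j, hj⟩ := hw
  exact Prod.ext h (by omega)

lemma cellLeft_eq (hv : 1 ≤ v.2) : cellLeft v = ((v.2 - 1 : ℕ) : ℝ) / 2 ^ v.1 := by
  rw [cellLeft, Nat.cast_sub hv, Nat.cast_one]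

lemma cellRight_eq : cellRight v = ((v.2 + 1 : ℕ) : ℝ) / 2 ^ v.1 := by
  rw [cellRight, Nat.cast_succ]

lemma exists_dyadicPt_eq (h0 : 0 < n) (hn : n < 2 ^ ℓ) (hℓ : ℓ ≤ L) :
    ∃ w, IsDyadicIndex L w ∧ dyadicPt w = n / 2 ^ ℓ := by
  obtain ⟨t, j, hj, rfl⟩ := Nat.exists_eq_two_pow_mul_odd h0.ne'
  have htj : 2 ^ t ≤ 2 ^ t * j := Nat.le_mul_of_pos_right _ hj.pos
  have ht : t < ℓ := (Nat.pow_lt_pow_iff_right (by norm_num)).1 (htj.trans_lt hn)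
  have hsplit : 2 ^ ℓ = 2 ^ t * 2 ^ (ℓ - t) := by rw [← pow_add, Nat.add_sub_cancel' ht.le]
  have hj' : j < 2 ^ (ℓ - t) := by
    rw [hsplit] at hn
    exact Nat.lt_of_mul_lt_mul_left hn
  refine ⟨(ℓ - t, j), ⟨by omega, by omega, hj, hj.pos, by simp only; omega⟩, ?_⟩
  rw [dyadicPt, div_two_pow_eq_div_two_pow_iff (Nat.sub_le ℓ t), Nat.sub_sub_self ht.le,
    mul_comm]

lemma div_two_pow_eq_zero_or_one_or_dyadicPt (hn : n ≤ 2 ^ ℓ) (hℓ : ℓ ≤ L) :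
    (n : ℝ) / 2 ^ ℓ = 0 ∨ (n : ℝ) / 2 ^ ℓ = 1 ∨
      ∃ w, IsDyadicIndex L w ∧ dyadicPt w = n / 2 ^ ℓ := by
  rcases Nat.eq_zero_or_pos n with rfl | h0
  · simp
  rcases hn.eq_or_lt with rfl | hlt
  · right; left; push_cast; exact div_self (by positivity)
  · exact Or.inr (Or.inr (exists_dyadicPt_eq h0 hlt hℓ))

lemma IsDyadicIndex.dyadicPt_mem_Ioo (hv : IsDyadicIndex L v) :
    dyadicPt v ∈ Set.Ioo (0 : ℝ) 1 := by
  obtain ⟨hv1, -, -, hv2, hv3⟩ := hv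
  refine ⟨div_pos (by exact_mod_cast hv2) (by positivity), ?_⟩
  rw [dyadicPt, div_lt_one (by positivity)]
  exact_mod_cast (by have := Nat.one_le_two_pow (n := v.1); omega : v.2 < 2 ^ v.1)

lemma IsDyadicIndex.cellLeft_nonneg (hv : IsDyadicIndex L v) : 0 ≤ cellLeft v := by
  rw [cellLeft_eq hv.2.2.2.1]
  positivity

lemma IsDyadicIndex.cellRight_le_one (hv : IsDyadicIndex L v) : cellRight v ≤ 1 := by
  obtain ⟨hv1, -, -, -, hv3⟩ := hv
  rw [cellRight, div_le_one (by positivity)]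
  exact_mod_cast (by have := Nat.one_le_two_pow (n := v.1); omega : v.2 + 1 ≤ 2 ^ v.1)

lemma cellLeft_lt_dyadicPt : cellLeft v < dyadicPt v := by
  rw [cellLeft, dyadicPt]
  gcongr
  linarith

lemma dyadicPt_lt_cellRight : dyadicPt v < cellRight v := by
  rw [cellRight, dyadicPt]
  gcongr
  linarith

end Dyadic

section Factor

variable {P Q p q : ℝ → ℝ} {L : ℕ} {S : Finset (ℕ × ℕ)} {x : ℝ}

variable (P Q) in
def cellHat (v : ℕ × ℕ) : ℝ → ℝ := hat P Q (cellLeft v) (dyadicPt v) (cellRight v)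

variable (P Q) in
def cellScale (v : ℕ × ℕ) : ℝ := normConst P Q (cellLeft v) (dyadicPt v) (cellRight v)

variable (P Q S) in
def hierarchicalFactor : Matrix S S ℝ :=
  Matrix.of fun u v =>
    cellScale P Q v * hatCoeff P Q (cellLeft v) (dyadicPt v) (cellRight v) (dyadicPt u)

def kernelMatrix (k : ℝ → ℝ → ℝ) (S : Finset (ℕ × ℕ)) : Matrix S S ℝ :=
  Matrix.of fun a b => k (dyadicPt a) (dyadicPt b)

lemma hierarchicalFactor_eq_zero_of_lex (hodd : ∀ v ∈ S, Odd v.2) {a b : S}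
    (h : b.1.1 < a.1.1 ∨ (b.1.1 = a.1.1 ∧ b.1.2 < a.1.2)) :
    hierarchicalFactor P Q S a b = 0 := by
  by_contra hne
  have hb := hodd b b.2
  rcases eq_or_eq_or_eq_of_hatCoeff_ne_zero (right_ne_zero_of_mul hne) with hab | hab | hab
  · rw [cellLeft_eq hb.pos] at hab
    have := lt_of_dyadicPt_eq_div (hodd a a.2) (Nat.Odd.sub_odd hb odd_one) hab
    omega
  · have := dyadicPt_injOn (hodd a a.2) hb hab
    rw [this] at h
    omega
  · rw [cellRight_eq] at hab
    have := lt_of_dyadicPt_eq_div (hodd a a.2) hb.add_one hab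
    omega

lemma card_filter_hierarchicalFactor_ne_zero_le (hodd : ∀ v ∈ S, Odd v.2) (v : S) :
    #{u : S | hierarchicalFactor P Q S u v ≠ 0} ≤ 3 := by
  calc #{u : S | hierarchicalFactor P Q S u v ≠ 0}
      ≤ #({cellLeft v, dyadicPt v, cellRight v} : Finset ℝ) := by
        refine card_le_card_of_injOn (fun u : S => dyadicPt u) (fun u hu => ?_) ?_
        · have hu : hatCoeff P Q _ _ _ (dyadicPt u) ≠ 0 :=
            right_ne_zero_of_mul (mem_filter.1 hu).2
          simpa using eq_or_eq_or_eq_of_hatCoeff_ne_zero hu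
        · exact fun u _ w _ h => Subtype.ext (dyadicPt_injOn (hodd u u.2) (hodd w w.2) h)
    _ ≤ 3 := card_le_three

lemma sum_mul_hierarchicalFactor (hodd : ∀ v ∈ S, Odd v.2) (g : ℝ → ℝ) (v : S)
    (ha : cellLeft v ∈ S.image dyadicPt ∨ g (cellLeft v) = 0)
    (hb : cellRight v ∈ S.image dyadicPt ∨ g (cellRight v) = 0) :
    ∑ u : S, g (dyadicPt u) * hierarchicalFactor P Q S u v =
      cellScale P Q v * (cross P Q (dyadicPt v) (cellRight v) * g (cellLeft v) -
        cross P Q (cellLeft v) (cellRight v) * g (dyadicPt v) +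
        cross P Q (cellLeft v) (dyadicPt v) * g (cellRight v)) := by
  have hinj : Set.InjOn dyadicPt S := fun u hu w hw => dyadicPt_injOn (hodd u hu) (hodd w hw)
  simp only [hierarchicalFactor, of_apply, mul_left_comm (g _), ← mul_sum]
  rw [sum_coe_sort S fun u => g (dyadicPt u) * hatCoeff P Q _ _ _ (dyadicPt u),
    ← sum_image (f := fun y => g y * hatCoeff P Q (cellLeft v) (dyadicPt v) (cellRight v) y) hinj,
    sum_mul_hatCoeff _ _ ha (Or.inl (mem_image_of_mem _ v.2)) hb]

lemma sum_minMaxKernel_mul_hierarchicalFactor (hS : ∀ v, v ∈ S ↔ IsDyadicIndex L v)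
    (hx : x ∈ Set.Ioo (0 : ℝ) 1) (v : S) :
    ∑ u : S, minMaxKernel p q x (dyadicPt u) * hierarchicalFactor (extendP p) (extendQ q) S u v =
      cellScale (extendP p) (extendQ q) v * cellHat (extendP p) (extendQ q) v x := by
  have hgrid : ∀ {n ℓ : ℕ}, n ≤ 2 ^ ℓ → ℓ ≤ L →
      (n : ℝ) / 2 ^ ℓ ∈ S.image dyadicPt ∨ minMaxKernel (extendP p) (extendQ q) x (n / 2 ^ ℓ) = 0 := by
    intro n ℓ hn hℓ
    rcases div_two_pow_eq_zero_or_one_or_dyadicPt hn hℓ with h | h | ⟨w, hw, hwn⟩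
    · rw [h]; exact Or.inr (minMaxKernel_extend_zero hx.1.le)
    · rw [h]; exact Or.inr (minMaxKernel_extend_one hx.2.le)
    · exact Or.inl (hwn ▸ mem_image_of_mem _ ((hS w).2 hw))
  obtain ⟨-, hvL, -, hv2, hv3⟩ := (hS v).1 v.2
  have hpow := Nat.one_le_two_pow (n := v.1.1)
  have hkernel : ∀ u : S, minMaxKernel p q x (dyadicPt u) =
      minMaxKernel (extendP p) (extendQ q) x (dyadicPt u) := fun u =>
    (minMaxKernel_extend_of_mem hx ((hS u).1 u.2).dyadicPt_mem_Ioo).symm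
  simp only [hkernel]
  rw [sum_mul_hierarchicalFactor (fun w hw => ((hS w).1 hw).2.2.1) _ v
    (cellLeft_eq hv2 ▸ hgrid (by omega) hvL) (cellRight_eq ▸ hgrid (by omega) hvL)]
  rfl

lemma mem_dyadicCell_of_sum_ne_zero (hS : ∀ v, v ∈ S ↔ IsDyadicIndex L v)
    (hx : x ∈ Set.Ioo (0 : ℝ) 1) {v : S}
    (h : ∑ u : S, minMaxKernel p q x (dyadicPt u) *
      hierarchicalFactor (extendP p) (extendQ q) S u v ≠ 0) :
    x ∈ dyadicCell v := by
  rw [sum_minMaxKernel_mul_hierarchicalFactor hS hx] at h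
  by_contra hxv
  rw [cellHat, hat_eq_zero_of_notMem hxv cellLeft_lt_dyadicPt.le dyadicPt_lt_cellRight.le,
    mul_zero] at h
  exact h rfl

lemma card_filter_sum_ne_zero_le (hS : ∀ v, v ∈ S ↔ IsDyadicIndex L v)
    (hx : x ∈ Set.Ioo (0 : ℝ) 1) :
    #{v : S | ∑ u : S, minMaxKernel p q x (dyadicPt u) *
      hierarchicalFactor (extendP p) (extendQ q) S u v ≠ 0} ≤ L := by
  have hodd : ∀ v : S, Odd v.1.2 := fun v => ((hS v).1 v.2).2.2.1
  calc _ ≤ #(Icc 1 L) := card_le_card_of_injOn (fun v : S => v.1.1) (fun v _ => ?_) ?_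
    _ = L := by simp
  · obtain ⟨h1, hL, -⟩ := (hS v).1 v.2
    simp [h1, hL]
  · intro v hv w hw h
    exact Subtype.ext (eq_of_mem_dyadicCell_of_fst_eq (hodd v) (hodd w)
      (mem_dyadicCell_of_sum_ne_zero hS hx (mem_filter.1 hv).2)
      (mem_dyadicCell_of_sum_ne_zero hS hx (mem_filter.1 hw).2) h)

lemma transpose_hierarchicalFactor_mul_kernelMatrix_apply
    (hS : ∀ v, v ∈ S ↔ IsDyadicIndex L v) (u w : S) :
    ((hierarchicalFactor (extendP p) (extendQ q) S)ᵀ * kernelMatrix (minMaxKernel p q) S) u w =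
      cellScale (extendP p) (extendQ q) u * cellHat (extendP p) (extendQ q) u (dyadicPt w) := by
  rw [mul_apply, ← sum_minMaxKernel_mul_hierarchicalFactor hS ((hS w).1 w.2).dyadicPt_mem_Ioo]
  refine sum_congr rfl fun a _ => ?_
  rw [transpose_apply, kernelMatrix, of_apply, minMaxKernel_comm, mul_comm]

lemma transpose_mul_kernelMatrix_mul_apply_of_fst_le (hS : ∀ v, v ∈ S ↔ IsDyadicIndex L v)
    {u v : S} (hle : v.1.1 ≤ u.1.1) :
    ((hierarchicalFactor (extendP p) (extendQ q) S)ᵀ * kernelMatrix (minMaxKernel p q) S *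
      hierarchicalFactor (extendP p) (extendQ q) S) u v =
      cellScale (extendP p) (extendQ q) v *
        (-cross (extendP p) (extendQ q) (cellLeft v) (cellRight v) *
          (cellScale (extendP p) (extendQ q) u *
            cellHat (extendP p) (extendQ q) u (dyadicPt v))) := by
  have hodd : ∀ w ∈ S, Odd w.2 := fun w hw => ((hS w).1 hw).2.2.1
  have hv := hodd v v.2
  -- `cellLeft v` and `cellRight v` have even numerators over `2 ^ v.1`, so they are not in the
  -- open cell of the finer-or-equal index `u`.
  have hvanish : ∀ {n : ℕ}, Even n → cellScale (extendP p) (extendQ q) u *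
      cellHat (extendP p) (extendQ q) u ((n : ℝ) / 2 ^ v.1.1) = 0 := fun hn => by
    rw [cellHat, hat_eq_zero_of_notMem (div_two_pow_notMem_dyadicCell (hodd u u.2) hle hn)
      cellLeft_lt_dyadicPt.le dyadicPt_lt_cellRight.le, mul_zero]
  have hleft : cellScale (extendP p) (extendQ q) u *
      cellHat (extendP p) (extendQ q) u (cellLeft v) = 0 := by
    rw [cellLeft_eq hv.pos]
    exact hvanish (Nat.Odd.sub_odd hv odd_one)
  have hright : cellScale (extendP p) (extendQ q) u *
      cellHat (extendP p) (extendQ q) u (cellRight v) = 0 := by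
    rw [cellRight_eq]
    exact hvanish hv.add_one
  simp only [mul_apply (M := _ * _), transpose_hierarchicalFactor_mul_kernelMatrix_apply hS]
  rw [sum_mul_hierarchicalFactor hodd (fun y => _ * cellHat _ _ u y) v (Or.inr hleft)
    (Or.inr hright), hleft, hright]
  ring

lemma transpose_mul_kernelMatrix_mul_hierarchicalFactor (hS : ∀ v, v ∈ S ↔ IsDyadicIndex L v)
    (hp : ∀ x ∈ Set.Ioo (0 : ℝ) 1, 0 < p x) (hq : ∀ x ∈ Set.Ioo (0 : ℝ) 1, 0 < q x)
    (hpq : StrictMonoOn (fun x => p x / q x) (Set.Ioo (0 : ℝ) 1)) :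
    (hierarchicalFactor (extendP p) (extendQ q) S)ᵀ * kernelMatrix (minMaxKernel p q) S *
      hierarchicalFactor (extendP p) (extendQ q) S = 1 := by
  set C := hierarchicalFactor (extendP p) (extendQ q) S
  have hK : (kernelMatrix (minMaxKernel p q) S).IsSymm :=
    IsSymm.ext fun a b => minMaxKernel_comm _ _
  have hG : (Cᵀ * kernelMatrix (minMaxKernel p q) S * C).IsSymm := by
    rw [IsSymm, transpose_mul, transpose_mul, transpose_transpose, hK.eq, Matrix.mul_assoc]
  have hlower : ∀ u v : S, v.1.1 ≤ u.1.1 →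
      (Cᵀ * kernelMatrix (minMaxKernel p q) S * C) u v = (1 : Matrix S S ℝ) u v := by
    intro u v hle
    rw [transpose_mul_kernelMatrix_mul_apply_of_fst_le hS hle, one_apply]
    split_ifs with huv
    · subst huv
      have hv := (hS u).1 u.2
      have hm := hv.dyadicPt_mem_Ioo
      have ham := cellLeft_lt_dyadicPt (v := u.1)
      have hmb := dyadicPt_lt_cellRight (v := u.1)
      rw [cellHat, cellScale, hat_mid ham.le hmb.le]
      linear_combination normConst_mul_self_mul
        (cross_extend_neg hp hq hpq hv.cellLeft_nonneg (ham.trans hmb) hv.cellRight_le_one)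
        (cross_extend_neg hp hq hpq hv.cellLeft_nonneg ham hm.2.le)
        (cross_extend_neg hp hq hpq hm.1.le hmb hv.cellRight_le_one)
    · have hvu : dyadicPt v ∉ dyadicCell u := fun h =>
        huv (Subtype.ext (eq_of_dyadicPt_mem_dyadicCell ((hS u).1 u.2).2.2.1 hle h).symm)
      rw [cellHat, hat_eq_zero_of_notMem hvu cellLeft_lt_dyadicPt.le dyadicPt_lt_cellRight.le]
      ring
  ext u v
  rcases le_total v.1.1 u.1.1 with hle | hle
  · exact hlower u v hle
  · rw [← hG.apply, hlower v u hle, one_apply, one_apply]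
    exact if_congr eq_comm rfl rfl

end Factor

end

end HierarchicalFeatures

open HierarchicalFeatures in
theorem dyadic_hierarchical_features_sparse_general
    (L : ℕ)
    (p q : ℝ → ℝ)
    (hp : ∀ x ∈ Set.Ioo (0 : ℝ) 1, 0 < p x)
    (hq : ∀ x ∈ Set.Ioo (0 : ℝ) 1, 0 < q x)
    (hpq : StrictMonoOn (fun x => p x / q x) (Set.Ioo (0 : ℝ) 1))
    (S : Finset (ℕ × ℕ))
    (hS : ∀ v : ℕ × ℕ, v ∈ S ↔ 1 ≤ v.1 ∧ v.1 ≤ L ∧ Odd v.2 ∧ 1 ≤ v.2 ∧ v.2 ≤ 2 ^ v.1 - 1)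
    (pt : ℕ × ℕ → ℝ) (hpt : ∀ v, pt v = (v.2 : ℝ) / 2 ^ v.1)
    (k : ℝ → ℝ → ℝ) (hk : ∀ x y, k x y = p (min x y) * q (max x y))
    (K : Matrix ↥S ↥S ℝ)
    (hK : ∀ a b : ↥S, K a b = k (pt a.1) (pt b.1)) :
    ∃ C : Matrix ↥S ↥S ℝ,
      (∀ a b : ↥S, (b.1.1 < a.1.1 ∨ (b.1.1 = a.1.1 ∧ b.1.2 < a.1.2)) → C a b = 0) ∧
      (∀ b : ↥S, (Finset.univ.filter fun a : ↥S => C a b ≠ 0).card ≤ 3) ∧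
      Cᵀ * K * C = 1 ∧
      (∀ x ∈ Set.Ioo (0 : ℝ) 1,
        (Finset.univ.filter fun a : ↥S =>
          (∑ b : ↥S, k x (pt b.1) * C b a) ≠ 0).card ≤ L) ∧
      (∀ x ∈ Set.Ioo (0 : ℝ) 1, ∀ a : ↥S,
        (∑ b : ↥S, k x (pt b.1) * C b a) ≠ 0 →
          ((a.1.2 : ℝ) - 1) / 2 ^ a.1.1 < x ∧ x < ((a.1.2 : ℝ) + 1) / 2 ^ a.1.1) := by
  obtain rfl : pt = dyadicPt := funext hpt
  obtain rfl : k = minMaxKernel p q := funext fun x => funext (hk x)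
  obtain rfl : K = kernelMatrix (minMaxKernel p q) S := Matrix.ext hK
  have hodd : ∀ v ∈ S, Odd v.2 := fun v hv => ((hS v).1 hv).2.2.1
  exact ⟨hierarchicalFactor (extendP p) (extendQ q) S,
    fun _ _ => hierarchicalFactor_eq_zero_of_lex hodd,
    card_filter_hierarchicalFactor_ne_zero_le hodd,
    transpose_mul_kernelMatrix_mul_hierarchicalFactor hS hp hq hpq,
    fun _ hx => card_filter_sum_ne_zero_le hS hx,
    fun _ hx _ => mem_dyadicCell_of_sum_ne_zero hS hx⟩

/-- With the notation of Statement 4, there is an upper-triangular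
(in lexicographic order) inverse Cholesky factor `C` of the Markov-kernel matrix `K`
on the sorted level-`L` dyadic points, with at most `3` nonzero entries per column
and `Cᵀ K C = 1`, such that moreover for every `x ∈ (0,1)` the hierarchical feature
vector `φ(x) = k(x, X) C` has at most `L` nonzero entries; more precisely,
`φ_{(ℓ,i)}(x) ≠ 0` implies `(i-1)·2^{-ℓ} < x < (i+1)·2^{-ℓ}`. -/
theorem dyadic_hierarchical_features_sparse
    (L : ℕ) (hL : 1 ≤ L)
    (p q : ℝ → ℝ)
    (hp : ∀ x ∈ Set.Ioo (0 : ℝ) 1, 0 < p x)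
    (hq : ∀ x ∈ Set.Ioo (0 : ℝ) 1, 0 < q x)
    (hpq : StrictMonoOn (fun x => p x / q x) (Set.Ioo (0 : ℝ) 1))
    (S : Finset (ℕ × ℕ))
    (hS : ∀ v : ℕ × ℕ, v ∈ S ↔ 1 ≤ v.1 ∧ v.1 ≤ L ∧ Odd v.2 ∧ 1 ≤ v.2 ∧ v.2 ≤ 2 ^ v.1 - 1)
    (pt : ℕ × ℕ → ℝ) (hpt : ∀ v, pt v = (v.2 : ℝ) / 2 ^ v.1)
    (k : ℝ → ℝ → ℝ) (hk : ∀ x y, k x y = p (min x y) * q (max x y))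
    (K : Matrix ↥S ↥S ℝ)
    (hK : ∀ a b : ↥S, K a b = k (pt a.1) (pt b.1)) :
    ∃ C : Matrix ↥S ↥S ℝ,
      (∀ a b : ↥S, (b.1.1 < a.1.1 ∨ (b.1.1 = a.1.1 ∧ b.1.2 < a.1.2)) → C a b = 0) ∧
      (∀ b : ↥S, (Finset.univ.filter fun a : ↥S => C a b ≠ 0).card ≤ 3) ∧
      Cᵀ * K * C = 1 ∧
      (∀ x ∈ Set.Ioo (0 : ℝ) 1,
        (Finset.univ.filter fun a : ↥S =>
          (∑ b : ↥S, k x (pt b.1) * C b a) ≠ 0).card ≤ L) ∧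
      (∀ x ∈ Set.Ioo (0 : ℝ) 1, ∀ a : ↥S,
        (∑ b : ↥S, k x (pt b.1) * C b a) ≠ 0 →
          ((a.1.2 : ℝ) - 1) / 2 ^ a.1.1 < x ∧ x < ((a.1.2 : ℝ) + 1) / 2 ^ a.1.1) :=
  dyadic_hierarchical_features_sparse_general L p q hp hq hpq S hS pt hpt k hk K hK
end
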